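/- Suppose (B̄,Ā) ∈ D̄ with m ≥ 1 satisfies hypothesis (∗∗), i_1 ≥ 2, i_m ≤ k̄, u⁻¹(ā_{i_m}) < u⁻¹(ā_{i_m+1}), and b̄_{j_1−1} < ā_{i_1−1}. Set Ã := Ā and B̃ := (b̄_{j_m}, b̄_{j_m+1})·(b̄_{j_1}, ā_{i_1−1})·B̄ (the cycle obtained from B̄ by removing b̄_{j_m} and inserting ā_{i_1−1} between b̄_{j_1−1} and b̄_{j_1}). Then (Ã,B̃) ∈ D, B̃·Ã = Ā·B̄, and the lengths of the defining index sequences satisfy k̃ + h̃ = k̄ + h̄. -/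

import Mathlib

/-!
Common setup: the symmetric group `S_n` (`n ≥ 2`) is modeled as `Equiv.Perm (Fin (n+2))`
(so every `n ≥ 2` is of the form `n+2` with `n : ℕ`).  The element `1` of `{1,…,n}` is
`0 : Fin (n+2)` and the element `n` is `Fin.last (n+1)`.
Composition of permutations is multiplication: `(C * C') x = C (C' x)`.
-/

open Equiv

namespace DblShortcut

variable {n : ℕ}

/-- The cycle `(n, a_k, …, a_1)` determined by the sequence `a_1, …, a_k`
(as `a : Fin k → Fin (n+2)`); when `k = 0` this is the identity. -/
def cycA {k : ℕ} (a : Fin k → Fin (n+2)) : Equiv.Perm (Fin (n+2)) :=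
  (Fin.last (n+1) :: (List.ofFn a).reverse).formPerm

/-- The cycle `(x, b_1, …, b_h)` determined by the base point `x` and the sequence
`b_1, …, b_h`; when `h = 0` this is the identity. -/
def cycB {h : ℕ} (x : Fin (n+2)) (b : Fin h → Fin (n+2)) : Equiv.Perm (Fin (n+2)) :=
  (x :: List.ofFn b).formPerm

/-- The length of the defining index sequence of a cycle as above:
`|support| - 1` (which is `0` for the identity, and `k` for `cycA a`, `h` for `cycB x b`). -/
def clen (C : Equiv.Perm (Fin (n+2))) : ℕ := C.support.card - 1

/-- The sequence `a_1, …, a_k` extended by `a_{k+1} := n`. -/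
def asnoc {k : ℕ} (a : Fin k → Fin (n+2)) : Fin (k+1) → Fin (n+2) :=
  Fin.snoc a (Fin.last (n+1))

/-- The sequence `b_1, …, b_h` prefixed by the base point `x` (`b_0 := x`). -/
def bcons {h : ℕ} (x : Fin (n+2)) (b : Fin h → Fin (n+2)) : Fin (h+1) → Fin (n+2) :=
  Fin.cons x b

/-- `a_t`, with the conventions `a_0 := n` and `a_{k+1} := n` (out-of-range values are `n`). -/
def aext {k : ℕ} (a : Fin k → Fin (n+2)) (t : ℕ) : Fin (n+2) :=
  if ht : 1 ≤ t ∧ t ≤ k then a ⟨t - 1, by omega⟩ else Fin.last (n+1)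

/-- `b_t`, with the conventions `b_0 := 1` and `b_{h+1} := 1` (out-of-range values are `1`). -/
def bext {h : ℕ} (b : Fin h → Fin (n+2)) (t : ℕ) : Fin (n+2) :=
  if ht : 1 ≤ t ∧ t ≤ h then b ⟨t - 1, by omega⟩ else 0

/-- Conditions (1) and (2) of the definition of `D` on the sequence `a_1 < … < a_k`:
`1 ≤ a_1 < … < a_k < n` and `v⁻¹(n) = u⁻¹(a_1) < u⁻¹(a_2) < … < u⁻¹(a_k) < u⁻¹(n)`
(with `v⁻¹(n) = u⁻¹(n)` when `k = 0`). -/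
def DCondA (u v : Perm (Fin (n+2))) {k : ℕ} (a : Fin k → Fin (n+2)) : Prop :=
  StrictMono a ∧ (∀ i, a i < Fin.last (n+1)) ∧
  v.symm (Fin.last (n+1)) = u.symm (asnoc a 0) ∧
  StrictMono fun i : Fin (k+1) => u.symm (asnoc a i)

/-- Conditions (3) and (4) of the definition of `D` on the sequence `b_1 < … < b_h`:
`1 < b_1 < … < b_h < n` and
`u⁻¹(A⁻¹(1)) < u⁻¹(A⁻¹(b_1)) < … < u⁻¹(A⁻¹(b_h)) = v⁻¹(1)`
(with `u⁻¹(A⁻¹(1)) = v⁻¹(1)` when `h = 0`). -/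
def DCondB (u v A : Perm (Fin (n+2))) {h : ℕ} (b : Fin h → Fin (n+2)) : Prop :=
  StrictMono b ∧ (∀ i, 0 < b i ∧ b i < Fin.last (n+1)) ∧
  (StrictMono fun i : Fin (h+1) => u.symm (A.symm (bcons 0 b i))) ∧
  u.symm (A.symm (bcons 0 b (Fin.last h))) = v.symm 0

/-- The set `D`: pairs `(A,B)` with `A = (n,a_k,…,a_1)`, `B = (1,b_1,…,b_h)`
satisfying conditions (1)–(4). -/
def memD (u v A B : Perm (Fin (n+2))) : Prop :=
  ∃ (k h : ℕ) (a : Fin k → Fin (n+2)) (b : Fin h → Fin (n+2)),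
    A = cycA a ∧ B = cycB 0 b ∧ DCondA u v a ∧ DCondB u v A b

/-- Conditions (a) and (b) of the definition of `D̄` on the sequence `b̄_1 < … < b̄_h̄`:
`1 < b̄_1 < … < b̄_h̄ ≤ n` and `u⁻¹(1) < u⁻¹(b̄_1) < … < u⁻¹(b̄_h̄) = v⁻¹(1)`
(with `u⁻¹(1) = v⁻¹(1)` when `h̄ = 0`). -/
def DbarCondB (u v : Perm (Fin (n+2))) {h : ℕ} (b : Fin h → Fin (n+2)) : Prop :=
  StrictMono b ∧ (∀ i, 0 < b i) ∧
  (StrictMono fun i : Fin (h+1) => u.symm (bcons 0 b i)) ∧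
  u.symm (bcons 0 b (Fin.last h)) = v.symm 0

/-- Conditions (c) and (d) of the definition of `D̄` on the sequence `ā_1 < … < ā_k̄`:
`1 ≤ ā_1 < … < ā_k̄ < n` and
`v⁻¹(n) = u⁻¹(B̄⁻¹(ā_1)) < … < u⁻¹(B̄⁻¹(ā_k̄)) < u⁻¹(B̄⁻¹(n))`
(with `v⁻¹(n) = u⁻¹(B̄⁻¹(n))` when `k̄ = 0`). -/
def DbarCondA (u v Bbar : Perm (Fin (n+2))) {k : ℕ} (a : Fin k → Fin (n+2)) : Prop :=
  StrictMono a ∧ (∀ i, a i < Fin.last (n+1)) ∧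
  v.symm (Fin.last (n+1)) = u.symm (Bbar.symm (asnoc a 0)) ∧
  StrictMono fun i : Fin (k+1) => u.symm (Bbar.symm (asnoc a i))

/-- The set `D̄`: pairs `(B̄,Ā)` with `B̄ = (1,b̄_1,…,b̄_h̄)`, `Ā = (n,ā_k̄,…,ā_1)`
satisfying conditions (a)–(d). -/
def memDbar (u v Bbar Abar : Perm (Fin (n+2))) : Prop :=
  ∃ (h k : ℕ) (b : Fin h → Fin (n+2)) (a : Fin k → Fin (n+2)),
    Bbar = cycB 0 b ∧ Abar = cycA a ∧ DbarCondB u v b ∧ DbarCondA u v Bbar a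

end DblShortcut

namespace DblShortcut

/-- Intersection data for `(A,B) ∈ D` with `m := |A_s ∩ B_s|`:
`A_s ∩ B_s = {c_1 < … < c_m}` and `c_l = a_{i_l} = b_{j_l}` with
`i_1 < … < i_m` in `{1,…,k}` and `j_1 < … < j_m` in `{0,1,…,h}`
(conventions `a_0 := n`, `b_0 := 1`, `a_{k+1} := n`, `b_{h+1} := 1`). -/
def InterD {n k h : ℕ} (a : Fin k → Fin (n+2)) (b : Fin h → Fin (n+2))
    {m : ℕ} (i j : Fin m → ℕ) : Prop :=
  StrictMono i ∧ StrictMono j ∧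
  (∀ l, 1 ≤ i l ∧ i l ≤ k) ∧ (∀ l, j l ≤ h) ∧
  (∀ l, aext a (i l) = bext b (j l)) ∧
  (cycA a).support ∩ (cycB 0 b).support
    = Finset.image (fun l => aext a (i l)) Finset.univ

/-- Intersection data for `(B̄,Ā) ∈ D̄` with `m := |Ā_s ∩ B̄_s|`:
`Ā_s ∩ B̄_s = {c̄_1 < … < c̄_m}` and `c̄_l = ā_{i_l} = b̄_{j_l}` with
`i_1 < … < i_m` in `{1,…,k̄+1}` and `j_1 < … < j_m` in `{1,…,h̄}`
(conventions `ā_0 := n`, `b̄_0 := 1`, `ā_{k̄+1} := n`, `b̄_{h̄+1} := 1`). -/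
def InterDbar {n h k : ℕ} (b : Fin h → Fin (n+2)) (a : Fin k → Fin (n+2))
    {m : ℕ} (i j : Fin m → ℕ) : Prop :=
  StrictMono i ∧ StrictMono j ∧
  (∀ l, 1 ≤ i l ∧ i l ≤ k + 1) ∧ (∀ l, 1 ≤ j l ∧ j l ≤ h) ∧
  (∀ l, aext a (i l) = bext b (j l)) ∧
  (cycA a).support ∩ (cycB 0 b).support
    = Finset.image (fun l => aext a (i l)) Finset.univ

/-- Hypothesis (∗) (resp. (∗∗)): consecutive intersection indices differ by `1`,
i.e. `i_{r+1} − i_r = 1` and `j_{r+1} − j_r = 1` for all `r ∈ {1,…,m−1}`. -/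
def StarHyp {m : ℕ} (i j : Fin m → ℕ) : Prop :=
  ∀ l : Fin m, ∀ hl : l.1 + 1 < m,
    i ⟨l.1 + 1, hl⟩ = i l + 1 ∧ j ⟨l.1 + 1, hl⟩ = j l + 1

end DblShortcut


/-!
`B̃` is the conjugate `Ā B̄ Ā⁻¹`. Indeed `Ā` fixes `1` and, on the support of `B̄`, moves only the
common block `b̄_{j_1}, …, b̄_{j_m} = ā_{i_1}, …, ā_{i_m}`, each entry one step down the
`ā`-sequence. So conjugating the cycle `(1, b̄_1, …, b̄_h̄)` by `Ā` replaces `b̄_{j_1}` by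
`ā_{i_1-1}` and shifts the rest of the block, which amounts to inserting `ā_{i_1-1}` before
`b̄_{j_1}` and deleting `b̄_{j_m}`: the two transpositions. Hence `B̃ Ã = Ā B̄` and
`|B̃_s| = |B̄_s|`, and `B̃` is the cycle of the sequence `Ā ∘ b̄`, which is increasing because
`b̄_{j_1-1} < ā_{i_1-1} < ā_{i_1}`. Condition (4) for `(Ã, B̃)` is condition (b) for `B̄`, as `Ã⁻¹`
maps the `b̃`'s back to the `b̄`'s. For (2): `B̄⁻¹` fixes every `ā_t` outside the block, so (d)
gives the inequalities there; inside the block they come from (b); the step into the block uses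
`B̄⁻¹(ā_{i_1}) = b̄_{j_1-1}`, and the step out of it is the hypothesis
`u⁻¹(ā_{i_m}) < u⁻¹(ā_{i_m+1})`.
-/

theorem List.formPerm_map_eq_mul_mul_inv {α : Type*} [DecidableEq α] (σ : Equiv.Perm α) :
    ∀ l : List α, formPerm (l.map σ) = σ * formPerm l * σ⁻¹
  | [] => by simp
  | [x] => by simp
  | x :: y :: l => by
    rw [map_cons, map_cons, formPerm_cons_cons, ← map_cons,
      formPerm_map_eq_mul_mul_inv σ (y :: l), formPerm_cons_cons, swap_apply_apply]
    group

theorem List.formPerm_append_cons {α : Type*} [DecidableEq α] {l₁ l₂ : List α} {x : α}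
    (hd : (l₁ ++ x :: l₂).Nodup) :
    formPerm (l₁ ++ x :: l₂) = Equiv.swap x ((l₂ ++ l₁).headD x) * formPerm (l₁ ++ l₂) := by
  have hrot : l₁ ++ x :: l₂ ~r x :: (l₂ ++ l₁) := by
    simpa using (isRotated_append (l := l₁) (l' := x :: l₂))
  have hd' := hrot.nodup_iff.mp hd
  rw [formPerm_eq_of_isRotated hd hrot, formPerm_eq_of_isRotated
    (nodup_append_comm.mp (nodup_cons.mp hd').2) (isRotated_append (l := l₁))]
  cases l₂ ++ l₁ with
  | nil => simp [Equiv.Perm.one_def]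
  | cons y r => simp

theorem List.formPerm_map_range'_apply {α : Type*} [DecidableEq α] {f : ℕ → α} {s N t : ℕ}
    (hd : ((range' s N).map f).Nodup) (hst : s ≤ t) (ht : t + 1 < s + N) :
    formPerm ((range' s N).map f) (f t) = f (t + 1) := by
  have key := formPerm_apply_lt_getElem _ hd (t - s) (by rw [length_map, length_range']; omega)
  simp only [getElem_map, getElem_range'] at key
  rwa [show s + 1 * (t - s) = t by omega, show s + 1 * (t - s + 1) = t + 1 by omega] at key

theorem Fin.strictMono_comp_val_iff_lt_succ {α : Type*} [Preorder α] {N : ℕ} {g : ℕ → α} :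
    StrictMono (fun i : Fin (N + 1) => g i) ↔ ∀ t < N, g t < g (t + 1) := by
  simp [Fin.strictMono_iff_lt_succ, Fin.forall_iff]

theorem List.support_formPerm_map_range' {α : Type*} [DecidableEq α] [Fintype α] {f : ℕ → α}
    {s N : ℕ} (hd : ((range' s N).map f).Nodup) (hN : 2 ≤ N) :
    (formPerm ((range' s N).map f)).support = ((range' s N).map f).toFinset :=
  support_formPerm_of_nodup _ hd fun x hx => by
    have := congrArg length hx
    simp only [length_map, length_range', length_singleton] at this
    omega

theorem List.mem_support_formPerm_map_range' {α : Type*} [DecidableEq α] [Fintype α]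
    {f : ℕ → α} {s N : ℕ} (hd : ((range' s N).map f).Nodup) (hN : 2 ≤ N) {y : α} :
    y ∈ (formPerm ((range' s N).map f)).support ↔ ∃ t, s ≤ t ∧ t < s + N ∧ f t = y := by
  simp [support_formPerm_map_range' hd hN, and_assoc]

theorem List.card_support_formPerm_map_range' {α : Type*} [DecidableEq α] [Fintype α]
    {f : ℕ → α} {s N : ℕ} (hd : ((range' s N).map f).Nodup) (hN : 2 ≤ N) :
    (formPerm ((range' s N).map f)).support.card = N := by
  rw [support_formPerm_map_range' hd hN, toFinset_card_of_nodup hd, length_map, length_range']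

namespace DblShortcut

variable {n h k : ℕ} {b : Fin h → Fin (n+2)} {a : Fin k → Fin (n+2)}

lemma bext_zero : bext b 0 = 0 := rfl

lemma bext_of_lt {t : ℕ} (ht : h < t) : bext b t = 0 := dif_neg (by omega)

lemma bext_of_le {t : ℕ} (h1 : 1 ≤ t) (h2 : t ≤ h) : bext b t = b ⟨t - 1, by omega⟩ :=
  dif_pos ⟨h1, h2⟩

lemma aext_of_lt {t : ℕ} (ht : k < t) : aext a t = Fin.last (n+1) := dif_neg (by omega)

lemma aext_of_le {t : ℕ} (h1 : 1 ≤ t) (h2 : t ≤ k) : aext a t = a ⟨t - 1, by omega⟩ :=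
  dif_pos ⟨h1, h2⟩

lemma bcons_zero_eq_bext (i : Fin (h+1)) : bcons 0 b i = bext b i := by
  cases i using Fin.cases with
  | zero => rfl
  | succ i => simp [bcons, bext_of_le]

lemma asnoc_eq_aext (i : Fin (k+1)) : asnoc a i = aext a (i + 1) := by
  cases i using Fin.lastCases with
  | last => simp [asnoc, aext_of_lt]
  | cast i => simp [asnoc, aext_of_le]

lemma ofFn_bcons_eq_map_bext : List.ofFn (bcons 0 b) = (List.range' 0 (h+1)).map (bext b) :=
  List.ext_getElem (by simp) fun t _ _ => by
    simp only [List.getElem_ofFn, List.getElem_map, List.getElem_range', bcons_zero_eq_bext]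
    simp

lemma ofFn_asnoc_eq_map_aext : List.ofFn (asnoc a) = (List.range' 1 (k+1)).map (aext a) :=
  List.ext_getElem (by simp) fun t _ _ => by
    simp only [List.getElem_ofFn, List.getElem_map, List.getElem_range', asnoc_eq_aext]
    simp [add_comm]

lemma cycB_zero_eq_formPerm : cycB 0 b = List.formPerm ((List.range' 0 (h+1)).map (bext b)) := by
  rw [cycB, ← ofFn_bcons_eq_map_bext, bcons, List.ofFn_cons]

lemma cycA_eq_formPerm_inv :
    cycA a = (List.formPerm ((List.range' 1 (k+1)).map (aext a)))⁻¹ := by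
  rw [cycA, ← ofFn_asnoc_eq_map_aext, ← List.formPerm_reverse, asnoc, List.ofFn_succ']
  simp

lemma strictMonoOn_bext (hb : StrictMono b) (hb0 : ∀ i, 0 < b i) :
    StrictMonoOn (bext b) (Set.Iic h) := by
  intro s _ t ht hst
  simp only [Set.mem_Iic] at ht
  rw [bext_of_le (by omega) ht]
  rcases Nat.eq_zero_or_pos s with rfl | hs
  · exact hb0 _
  · rw [bext_of_le hs (by omega)]
    exact hb (Fin.mk_lt_mk.mpr (by omega))

lemma strictMonoOn_aext (ha : StrictMono a) (hal : ∀ i, a i < Fin.last (n+1)) :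
    StrictMonoOn (aext a) (Set.Icc 1 (k+1)) := by
  rintro s ⟨hs, -⟩ t ⟨-, ht⟩ hst
  rw [aext_of_le hs (by omega)]
  rcases Nat.lt_or_ge k t with hkt | hkt
  · rw [aext_of_lt hkt]
    exact hal _
  · rw [aext_of_le (by omega) hkt]
    exact ha (Fin.mk_lt_mk.mpr (by omega))

lemma nodup_map_bext (hb : StrictMono b) (hb0 : ∀ i, 0 < b i) :
    ((List.range' 0 (h+1)).map (bext b)).Nodup :=
  (List.nodup_range' (s := 0)).map_on fun s hs t ht hst =>
    (strictMonoOn_bext hb hb0).injOn (Set.mem_Iic.mpr (by grind)) (Set.mem_Iic.mpr (by grind)) hst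

lemma nodup_map_aext (ha : StrictMono a) (hal : ∀ i, a i < Fin.last (n+1)) :
    ((List.range' 1 (k+1)).map (aext a)).Nodup :=
  (List.nodup_range' (s := 1)).map_on fun s hs t ht hst =>
    (strictMonoOn_aext ha hal).injOn ⟨by grind, by grind⟩ ⟨by grind, by grind⟩ hst

lemma mem_support_cycB (hb : StrictMono b) (hb0 : ∀ i, 0 < b i) (hh : 1 ≤ h)
    {y : Fin (n+2)} : y ∈ (cycB 0 b).support ↔ ∃ t ≤ h, bext b t = y := by
  rw [cycB_zero_eq_formPerm, List.mem_support_formPerm_map_range' (nodup_map_bext hb hb0)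
    (by omega)]
  grind

lemma mem_support_cycA (ha : StrictMono a) (hal : ∀ i, a i < Fin.last (n+1)) (hk : 1 ≤ k)
    {y : Fin (n+2)} : y ∈ (cycA a).support ↔ ∃ t, 1 ≤ t ∧ t ≤ k + 1 ∧ aext a t = y := by
  rw [cycA_eq_formPerm_inv, Equiv.Perm.support_inv,
    List.mem_support_formPerm_map_range' (nodup_map_aext ha hal) (by omega)]
  grind

lemma card_support_cycB (hb : StrictMono b) (hb0 : ∀ i, 0 < b i) (hh : 1 ≤ h) :
    (cycB 0 b).support.card = h + 1 := by
  rw [cycB_zero_eq_formPerm,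
    List.card_support_formPerm_map_range' (nodup_map_bext hb hb0) (by omega)]

lemma card_support_cycA (ha : StrictMono a) (hal : ∀ i, a i < Fin.last (n+1)) (hk : 1 ≤ k) :
    (cycA a).support.card = k + 1 := by
  rw [cycA_eq_formPerm_inv, Equiv.Perm.support_inv,
    List.card_support_formPerm_map_range' (nodup_map_aext ha hal) (by omega)]

lemma cycB_bext (hb : StrictMono b) (hb0 : ∀ i, 0 < b i) {t : ℕ} (ht : t < h) :
    cycB 0 b (bext b t) = bext b (t + 1) := by
  rw [cycB_zero_eq_formPerm,
    List.formPerm_map_range'_apply (nodup_map_bext hb hb0) (Nat.zero_le t) (by omega)]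

lemma cycA_aext (ha : StrictMono a) (hal : ∀ i, a i < Fin.last (n+1)) {t : ℕ} (h1 : 2 ≤ t)
    (h2 : t ≤ k + 1) : cycA a (aext a t) = aext a (t - 1) := by
  rw [cycA_eq_formPerm_inv, Equiv.Perm.inv_eq_iff_eq, ← Nat.sub_add_cancel (by omega : 1 ≤ t),
    List.formPerm_map_range'_apply (nodup_map_aext ha hal) (by omega) (by omega)]
  simp

lemma pairwise_map_bext (hb : StrictMono b) (hb0 : ∀ i, 0 < b i) :
    ((List.range' 0 (h+1)).map (bext b)).Pairwise (· < ·) :=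
  List.pairwise_map.mpr <| (List.pairwise_lt_range' (s := 0)).imp_of_mem fun hs ht hst =>
    strictMonoOn_bext hb hb0 (Set.mem_Iic.mpr (by grind)) (Set.mem_Iic.mpr (by grind)) hst

lemma mul_cycB_mul_inv (σ : Equiv.Perm (Fin (n+2))) {x : Fin (n+2)} (hσ : σ x = x) :
    σ * cycB x b * σ⁻¹ = cycB x (σ ∘ b) := by
  rw [cycB, cycB, ← List.formPerm_map_eq_mul_mul_inv, List.map_cons, hσ, List.map_ofFn]

lemma clen_cycA_add_clen_conj (hb : StrictMono b) (hb0 : ∀ i, 0 < b i) (hh : 1 ≤ h)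
    (ha : StrictMono a) (hal : ∀ i, a i < Fin.last (n+1)) (hk : 1 ≤ k)
    (σ : Equiv.Perm (Fin (n+2))) : clen (cycA a) + clen (σ * cycB 0 b * σ⁻¹) = k + h := by
  rw [clen, clen, Equiv.Perm.card_support_conj, card_support_cycA ha hal hk,
    card_support_cycB hb hb0 hh]
  omega

section Block

-- `p` and `q` play the roles of `i_1` and `j_1`: under (∗∗) the common support of `Ā` and `B̄`
-- is the block `ā_p, …, ā_{p+m-1} = b̄_q, …, b̄_{q+m-1}`.
variable {m p q : ℕ}

lemma cycA_bext_eq_self (hb : StrictMono b) (hb0 : ∀ i, 0 < b i) (hh : 1 ≤ h)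
    (hab : ∀ l < m, aext a (p + l) = bext b (q + l))
    (hsupp : ∀ y ∈ (cycA a).support, y ∈ (cycB 0 b).support → ∃ l < m, aext a (p + l) = y)
    (hqh : q + m ≤ h + 1) {t : ℕ} (ht : t ≤ h) (hout : t < q ∨ q + m ≤ t) :
    cycA a (bext b t) = bext b t := by
  by_contra hne
  obtain ⟨l, hl, hy⟩ := hsupp _ (Equiv.Perm.mem_support.mpr hne)
    ((mem_support_cycB hb hb0 hh).mpr ⟨t, ht, rfl⟩)
  rw [hab l hl] at hy
  have := (strictMonoOn_bext hb hb0).injOn (Set.mem_Iic.mpr (by omega)) (by simpa using ht) hy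
  omega

lemma cycB_aext_eq_self (ha : StrictMono a) (hal : ∀ i, a i < Fin.last (n+1)) (hk : 1 ≤ k)
    (hsupp : ∀ y ∈ (cycA a).support, y ∈ (cycB 0 b).support → ∃ l < m, aext a (p + l) = y)
    (hp : 1 ≤ p) (hpk : p + m ≤ k + 2) {t : ℕ} (h1 : 1 ≤ t) (h2 : t ≤ k + 1)
    (hout : t < p ∨ p + m ≤ t) :
    cycB 0 b (aext a t) = aext a t := by
  by_contra hne
  obtain ⟨l, hl, hy⟩ := hsupp _ ((mem_support_cycA ha hal hk).mpr ⟨t, h1, h2, rfl⟩)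
    (Equiv.Perm.mem_support.mpr hne)
  have := (strictMonoOn_aext ha hal).injOn ⟨by omega, by omega⟩ ⟨by omega, by omega⟩ hy
  omega

lemma map_bext_eq_append (hab : ∀ l < m, aext a (p + l) = bext b (q + l)) (hm : 1 ≤ m)
    (hqh : q + m ≤ h + 1) :
    (List.range' 0 (h+1)).map (bext b) =
      (List.range' 0 q).map (bext b) ++ ((List.range' p (m-1)).map (aext a) ++
        aext a (p + (m-1)) :: (List.range' (q+m) (h+1-(q+m))).map (bext b)) := by
  have hblock : (List.range' q m).map (bext b) = (List.range' p m).map (aext a) :=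
    List.ext_getElem (by simp) fun l hl _ => by
      simp only [List.getElem_map, List.getElem_range', one_mul]
      exact (hab l (by simpa using hl)).symm
  obtain ⟨m', rfl⟩ := Nat.exists_eq_add_of_le' hm
  have hsplit : List.range' 0 (h+1) = List.range' 0 q ++
      (List.range' q (m'+1) ++ List.range' (q + (m'+1)) (h+1-(q+(m'+1)))) := by
    rw [List.range'_append_1]
    simpa [show q + (m' + 1 + (h + 1 - (q + (m' + 1)))) = h + 1 by omega] using
      (List.range'_append_1 (s := 0) (m := q) (n := m' + 1 + (h + 1 - (q + (m' + 1))))).symm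
  rw [hsplit, List.map_append, List.map_append, hblock, List.range'_1_concat]
  simp

lemma map_cycA_map_bext (hb : StrictMono b) (hb0 : ∀ i, 0 < b i) (hh : 1 ≤ h)
    (ha : StrictMono a) (hal : ∀ i, a i < Fin.last (n+1))
    (hab : ∀ l < m, aext a (p + l) = bext b (q + l))
    (hsupp : ∀ y ∈ (cycA a).support, y ∈ (cycB 0 b).support → ∃ l < m, aext a (p + l) = y)
    (hm : 1 ≤ m) (hp : 2 ≤ p) (hpk : p + m ≤ k + 1) (hqh : q + m ≤ h + 1) :
    ((List.range' 0 (h+1)).map (bext b)).map (cycA a) =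
      (List.range' 0 q).map (bext b) ++ aext a (p - 1) :: ((List.range' p (m-1)).map (aext a) ++
        (List.range' (q+m) (h+1-(q+m))).map (bext b)) := by
  have hfix : ∀ s r, (s + r ≤ q ∨ q + m ≤ s) → s + r ≤ h + 1 →
      ((List.range' s r).map (bext b)).map (cycA a) = (List.range' s r).map (bext b) := by
    intro s r hsr hr
    rw [List.map_map]
    refine List.map_congr_left fun t ht => ?_
    rw [List.mem_range'_1] at ht
    exact cycA_bext_eq_self hb hb0 hh hab hsupp hqh (by omega) (by omega)
  have hblock : ((List.range' p (m-1)).map (aext a) ++ [aext a (p + (m-1))]).map (cycA a) =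
      aext a (p - 1) :: (List.range' p (m-1)).map (aext a) := by
    have hshift : ((List.range' p m).map (aext a)).map (cycA a) =
        (List.range' (p - 1) m).map (aext a) :=
      List.ext_getElem (by simp) fun l hl _ => by
        simp only [List.length_map, List.length_range'] at hl
        simp only [List.getElem_map, List.getElem_range', one_mul]
        rw [cycA_aext ha hal (by omega) (by omega)]
        congr 1
        omega
    rw [← List.map_singleton (f := aext a), ← List.map_append, ← List.range'_1_concat,
      Nat.sub_add_cancel hm, hshift]
    obtain ⟨m', rfl⟩ := Nat.exists_eq_add_of_le' hm
    obtain ⟨p', rfl⟩ := Nat.exists_eq_add_of_le' (by omega : 1 ≤ p)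
    simp [List.range'_succ]
  rw [map_bext_eq_append hab hm hqh, List.map_append, hfix 0 q (by omega) (by omega),
    List.append_cons _ (aext a (p + (m-1))), List.map_append (l₁ := _ ++ [_]), hblock,
    hfix _ _ (by omega) (by omega)]
  rfl

lemma cycA_mul_cycB_mul_inv (hb : StrictMono b) (hb0 : ∀ i, 0 < b i) (hh : 1 ≤ h)
    (ha : StrictMono a) (hal : ∀ i, a i < Fin.last (n+1)) (hk : 1 ≤ k)
    (hab : ∀ l < m, aext a (p + l) = bext b (q + l))
    (hsupp : ∀ y ∈ (cycA a).support, y ∈ (cycB 0 b).support → ∃ l < m, aext a (p + l) = y)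
    (hm : 1 ≤ m) (hp : 2 ≤ p) (hq : 1 ≤ q) (hpk : p + m ≤ k + 1) (hqh : q + m ≤ h + 1) :
    cycA a * cycB 0 b * (cycA a)⁻¹ = Equiv.swap (bext b (q + (m-1))) (bext b (q + m)) *
      (Equiv.swap (bext b q) (aext a (p - 1)) * cycB 0 b) := by
  set P := (List.range' 0 q).map (bext b)
  set C := (List.range' p (m-1)).map (aext a)
  set S := (List.range' (q+m) (h+1-(q+m))).map (bext b)
  set x := aext a (p - 1)
  set c := aext a (p + (m-1))
  have hL := map_bext_eq_append hab hm hqh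
  have hx : x ∉ P ++ (C ++ c :: S) := by
    rw [← hL]
    intro hxL
    obtain ⟨t, ht, hxt⟩ := List.mem_map.mp hxL
    rw [List.mem_range'_1] at ht
    obtain ⟨l, hlm, hl⟩ := hsupp x
      ((mem_support_cycA ha hal hk).mpr ⟨p - 1, by omega, by omega, rfl⟩)
      ((mem_support_cycB hb hb0 hh).mpr ⟨t, by omega, hxt⟩)
    have := (strictMonoOn_aext ha hal).injOn ⟨by omega, by omega⟩ ⟨by omega, by omega⟩ hl
    omega
  have hnd : (P ++ x :: (C ++ c :: S)).Nodup :=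
    List.nodup_middle.mpr (List.nodup_cons.mpr ⟨hx, hL ▸ nodup_map_bext hb hb0⟩)
  -- Inserting `x` before the block and then deleting its last element `c` turns the cycle list
  -- of `B̄` into its image under `Ā`.
  have hins := List.formPerm_append_cons hnd
  have hrem := List.formPerm_append_cons (l₁ := P ++ x :: C) (x := c) (l₂ := S)
    (by simpa using hnd)
  have hhead₁ : (C ++ c :: S ++ P).headD x = bext b q := by
    rw [← add_zero q, ← hab 0 hm]
    rcases Nat.eq_zero_or_pos (m - 1) with hm1 | hm1
    · simp [C, c, hm1]
    · obtain ⟨m', hm'⟩ := Nat.exists_eq_add_of_lt hm1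
      simp [C, hm', List.range'_succ]
  -- If the block ends the list, the successor of `c` wraps around to `b̄_0 = 1 = bext b (h + 1)`.
  have hhead₂ : (S ++ (P ++ x :: C)).headD c = bext b (q + m) := by
    rcases Nat.eq_zero_or_pos (h + 1 - (q + m)) with hr | hr
    · obtain ⟨q', rfl⟩ := Nat.exists_eq_add_of_le' hq
      simp [S, P, hr, List.range'_succ, bext_of_lt (show h < q' + 1 + m by omega), bext_zero]
    · obtain ⟨r, hr'⟩ := Nat.exists_eq_add_of_lt hr
      simp [S, hr', List.range'_succ]
  rw [cycB_zero_eq_formPerm, ← List.formPerm_map_eq_mul_mul_inv, map_cycA_map_bext hb hb0 hh ha hal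
    hab hsupp hm hp hpk hqh, hL, ← hab (m - 1) (by omega), ← hhead₂, Equiv.swap_comm (bext b q),
    ← hhead₁, ← hins, show P ++ x :: (C ++ c :: S) = P ++ x :: C ++ c :: S by simp, hrem,
    Equiv.swap_mul_self_mul, List.append_assoc, List.cons_append]

lemma pairwise_map_cycA_map_bext (hb : StrictMono b) (hb0 : ∀ i, 0 < b i) (hh : 1 ≤ h)
    (ha : StrictMono a) (hal : ∀ i, a i < Fin.last (n+1))
    (hab : ∀ l < m, aext a (p + l) = bext b (q + l))
    (hsupp : ∀ y ∈ (cycA a).support, y ∈ (cycB 0 b).support → ∃ l < m, aext a (p + l) = y)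
    (hm : 1 ≤ m) (hp : 2 ≤ p) (hq : 1 ≤ q) (hpk : p + m ≤ k + 1) (hqh : q + m ≤ h + 1)
    (hcmp : bext b (q - 1) < aext a (p - 1)) :
    (((List.range' 0 (h+1)).map (bext b)).map (cycA a)).Pairwise (· < ·) := by
  have hsorted := pairwise_map_bext hb hb0
  rw [map_bext_eq_append hab hm hqh] at hsorted
  have hsub := hsorted.sublist (((List.sublist_cons_self _ _).append_left _).append_left _)
  rw [List.pairwise_append] at hsub
  obtain ⟨hP, hCS, hPCS⟩ := hsub
  have hxp : aext a (p - 1) < bext b q := by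
    rw [← add_zero q, ← hab 0 hm]
    exact strictMonoOn_aext ha hal ⟨by omega, by omega⟩ ⟨by omega, by omega⟩ (by omega)
  rw [map_cycA_map_bext hb hb0 hh ha hal hab hsupp hm hp hpk hqh, List.pairwise_append,
    List.pairwise_cons]
  refine ⟨hP, ⟨fun z hz => ?_, hCS⟩, fun y hy z hz => ?_⟩
  · rcases List.mem_append.mp hz with hz | hz <;> obtain ⟨t, ht, rfl⟩ := List.mem_map.mp hz <;>
      rw [List.mem_range'_1] at ht
    · exact strictMonoOn_aext ha hal ⟨by omega, by omega⟩ ⟨by omega, by omega⟩ (by omega)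
    · exact hxp.trans (strictMonoOn_bext hb hb0 (Set.mem_Iic.mpr (by omega))
        (Set.mem_Iic.mpr (by omega)) (by omega))
  · rcases List.mem_cons.mp hz with rfl | hz
    · obtain ⟨t, ht, rfl⟩ := List.mem_map.mp hy
      rw [List.mem_range'_1] at ht
      exact lt_of_le_of_lt ((strictMonoOn_bext hb hb0).monotoneOn (Set.mem_Iic.mpr (by omega))
        (Set.mem_Iic.mpr (by omega)) (by omega)) hcmp
    · exact hPCS y hy z hz

lemma cycA_lt_last_of_mem_support_cycB (ha : StrictMono a) (hal : ∀ i, a i < Fin.last (n+1))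
    (hk : 1 ≤ k)
    (hsupp : ∀ y ∈ (cycA a).support, y ∈ (cycB 0 b).support → ∃ l < m, aext a (p + l) = y)
    (hp : 2 ≤ p) (hpk : p + m ≤ k + 1) {y : Fin (n+2)} (hy : y ∈ (cycB 0 b).support) :
    cycA a y < Fin.last (n+1) := by
  by_cases hyA : y ∈ (cycA a).support
  · obtain ⟨l, hl, rfl⟩ := hsupp y hyA hy
    rw [cycA_aext ha hal (by omega) (by omega), ← aext_of_lt (a := a) (Nat.lt_succ_self k)]
    exact strictMonoOn_aext ha hal ⟨by omega, by omega⟩ ⟨by omega, by omega⟩ (by omega)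
  · rw [Equiv.Perm.notMem_support.mp hyA]
    refine lt_of_le_of_ne (Fin.le_last _) fun hlast => hyA ?_
    rw [hlast, mem_support_cycA ha hal hk]
    exact ⟨k + 1, by omega, le_rfl, aext_of_lt (by omega)⟩

lemma symm_aext_lt_symm_aext_succ (u : Equiv.Perm (Fin (n+2)))
    (hU : ∀ t < h, u.symm (bext b t) < u.symm (bext b (t + 1)))
    (hG : ∀ t, 1 ≤ t → t ≤ k →
      u.symm ((cycB 0 b).symm (aext a t)) < u.symm ((cycB 0 b).symm (aext a (t + 1))))
    (hb : StrictMono b) (hb0 : ∀ i, 0 < b i) (ha : StrictMono a)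
    (hal : ∀ i, a i < Fin.last (n+1)) (hk : 1 ≤ k)
    (hab : ∀ l < m, aext a (p + l) = bext b (q + l))
    (hsupp : ∀ y ∈ (cycA a).support, y ∈ (cycB 0 b).support → ∃ l < m, aext a (p + l) = y)
    (hm : 1 ≤ m) (hp : 2 ≤ p) (hq : 1 ≤ q) (hpk : p + m ≤ k + 1) (hqh : q + m ≤ h + 1)
    (hpos : u.symm (aext a (p + (m-1))) < u.symm (aext a (p + (m-1) + 1)))
    {t : ℕ} (h1 : 1 ≤ t) (h2 : t ≤ k) :
    u.symm (aext a t) < u.symm (aext a (t + 1)) := by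
  have hfix : ∀ s, 1 ≤ s → s ≤ k + 1 → (s < p ∨ p + m ≤ s) →
      (cycB 0 b).symm (aext a s) = aext a s := fun s hs1 hs2 hs =>
    (Equiv.symm_apply_eq _).mpr
      (cycB_aext_eq_self ha hal hk hsupp (by omega) (by omega) hs1 hs2 hs).symm
  rcases Nat.lt_or_ge (t + 1) p with hlt | hge
  · simpa only [hfix t h1 (by omega) (by omega), hfix (t + 1) (by omega) (by omega) (by omega)]
      using hG t h1 h2
  obtain rfl | hge := hge.eq_or_lt
  · have hprev : (cycB 0 b).symm (aext a (t + 1)) = bext b (q - 1) := by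
      rw [Equiv.symm_apply_eq, cycB_bext hb hb0 (by omega), Nat.sub_add_cancel hq, ← add_zero q,
        ← hab 0 (by omega), add_zero]
    have key := hG t h1 h2
    rw [hfix t h1 (by omega) (by omega), hprev] at key
    refine key.trans ?_
    have := hU (q - 1) (by omega)
    rwa [Nat.sub_add_cancel hq, ← add_zero q, ← hab 0 (by omega), add_zero] at this
  rcases Nat.lt_or_ge t (p + (m - 1)) with hin | hout
  · have := hU (q + (t - p)) (by omega)
    rwa [← hab _ (by omega), add_assoc, ← hab _ (by omega), ← Nat.add_sub_assoc (by omega),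
      Nat.add_sub_cancel_left, show p + (t - p + 1) = t + 1 by omega] at this
  obtain rfl | hout := hout.eq_or_lt
  · exact hpos
  · simpa only [hfix t h1 (by omega) (by omega), hfix (t + 1) (by omega) (by omega) (by omega)]
      using hG t h1 h2

lemma dCondA_of_dbarCondA {u v : Equiv.Perm (Fin (n+2))} (hB : DbarCondB u v b)
    (hA : DbarCondA u v (cycB 0 b) a) (hk : 1 ≤ k)
    (hab : ∀ l < m, aext a (p + l) = bext b (q + l))
    (hsupp : ∀ y ∈ (cycA a).support, y ∈ (cycB 0 b).support → ∃ l < m, aext a (p + l) = y)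
    (hm : 1 ≤ m) (hp : 2 ≤ p) (hq : 1 ≤ q) (hpk : p + m ≤ k + 1) (hqh : q + m ≤ h + 1)
    (hpos : u.symm (aext a (p + (m-1))) < u.symm (aext a (p + (m-1) + 1))) :
    DCondA u v a := by
  obtain ⟨hb, hb0, hU, -⟩ := hB
  obtain ⟨ha, hal, hv, hG⟩ := hA
  simp only [bcons_zero_eq_bext] at hU
  simp only [asnoc_eq_aext] at hG
  have hU' := Fin.strictMono_comp_val_iff_lt_succ (g := fun t => u.symm (bext b t)) |>.mp hU
  have hG' := Fin.strictMono_comp_val_iff_lt_succ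
    (g := fun t => u.symm ((cycB 0 b).symm (aext a (t + 1)))) |>.mp hG
  have hstep : ∀ t, 1 ≤ t → t ≤ k → u.symm (aext a t) < u.symm (aext a (t + 1)) :=
    fun t h1 h2 => symm_aext_lt_symm_aext_succ u hU'
      (fun t h1 _ => by simpa [Nat.sub_add_cancel h1] using hG' (t - 1) (by omega))
      hb hb0 ha hal hk hab hsupp hm hp hq hpk hqh hpos h1 h2
  refine ⟨ha, hal, ?_, ?_⟩
  · rw [hv, asnoc_eq_aext, Fin.val_zero, zero_add, (Equiv.symm_apply_eq _).mpr
      (cycB_aext_eq_self ha hal hk hsupp (by omega) (by omega) le_rfl (by omega) (by omega)).symm]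
  · simp only [asnoc_eq_aext]
    exact Fin.strictMono_comp_val_iff_lt_succ (g := fun t => u.symm (aext a (t + 1))) |>.mpr
      fun t ht => hstep (t + 1) (by omega) (by omega)

lemma dCondB_cycA_comp {u v : Equiv.Perm (Fin (n+2))} (hB : DbarCondB u v b)
    (ha : StrictMono a) (hal : ∀ i, a i < Fin.last (n+1)) (hk : 1 ≤ k)
    (hab : ∀ l < m, aext a (p + l) = bext b (q + l))
    (hsupp : ∀ y ∈ (cycA a).support, y ∈ (cycB 0 b).support → ∃ l < m, aext a (p + l) = y)
    (hm : 1 ≤ m) (hp : 2 ≤ p) (hq : 1 ≤ q) (hpk : p + m ≤ k + 1) (hqh : q + m ≤ h + 1)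
    (hcmp : bext b (q - 1) < aext a (p - 1)) (hA0 : cycA a 0 = 0) :
    DCondB u v (cycA a) (cycA a ∘ b) := by
  obtain ⟨hb, hb0, hU, hUlast⟩ := hB
  have hh : 1 ≤ h := by omega
  have hbcons : bcons 0 (cycA a ∘ b) = cycA a ∘ bcons 0 b := by
    rw [bcons, bcons, Fin.comp_cons, hA0]
  have hsorted := pairwise_map_cycA_map_bext hb hb0 hh ha hal hab hsupp hm hp hq hpk hqh hcmp
  rw [← ofFn_bcons_eq_map_bext, List.map_ofFn, ← hbcons, bcons, List.ofFn_cons,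
    List.pairwise_cons] at hsorted
  refine ⟨hsorted.2.sortedLT.strictMono, fun i => ⟨hsorted.1 _ (List.mem_ofFn.mpr ⟨i, rfl⟩),
    cycA_lt_last_of_mem_support_cycB ha hal hk hsupp hp hpk ?_⟩, ?_, ?_⟩
  · exact (mem_support_cycB hb hb0 hh).mpr
      ⟨i + 1, by omega, by rw [bext_of_le (by omega) (by omega)]; rfl⟩
  · simpa only [hbcons, Function.comp_apply, Equiv.symm_apply_apply] using hU
  · simpa only [hbcons, Function.comp_apply, Equiv.symm_apply_apply] using hUlast

lemma memD_cycA_mul_cycB_mul_inv {u v : Equiv.Perm (Fin (n+2))} (hB : DbarCondB u v b)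
    (hA : DbarCondA u v (cycB 0 b) a) (hab : ∀ l < m, aext a (p + l) = bext b (q + l))
    (hsupp : ∀ y ∈ (cycA a).support, y ∈ (cycB 0 b).support → ∃ l < m, aext a (p + l) = y)
    (hm : 1 ≤ m) (hp : 2 ≤ p) (hq : 1 ≤ q) (hpk : p + m ≤ k + 1) (hqh : q + m ≤ h + 1)
    (hpos : u.symm (aext a (p + (m-1))) < u.symm (aext a (p + (m-1) + 1)))
    (hcmp : bext b (q - 1) < aext a (p - 1)) :
    memD u v (cycA a) (cycA a * cycB 0 b * (cycA a)⁻¹) := by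
  have hA0 : cycA a 0 = 0 :=
    cycA_bext_eq_self hB.1 hB.2.1 (by omega) hab hsupp hqh (Nat.zero_le h) (Or.inl hq)
  exact ⟨k, h, a, cycA a ∘ b, rfl, mul_cycB_mul_inv _ hA0,
    dCondA_of_dbarCondA hB hA (by omega) hab hsupp hm hp hq hpk hqh hpos,
    dCondB_cycA_comp hB hA.1 hA.2.1 (by omega) hab hsupp hm hp hq hpk hqh hcmp hA0⟩

end Block

lemma StarHyp.eq_add {m : ℕ} {i j : Fin m → ℕ} (hstar : StarHyp i j) (hm : 0 < m) :
    ∀ l : Fin m, i l = i ⟨0, hm⟩ + l ∧ j l = j ⟨0, hm⟩ + l := by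
  rintro ⟨l, hl⟩
  induction l with
  | zero => simp
  | succ l ih =>
    obtain ⟨hi, hj⟩ := hstar ⟨l, by omega⟩ hl
    obtain ⟨hi', hj'⟩ := ih (by omega)
    exact ⟨by rw [hi, hi']; rfl, by rw [hj, hj']; rfl⟩

lemma InterDbar.aext_add_eq_bext_add {m : ℕ} {i j : Fin m → ℕ} (hinter : InterDbar b a i j)
    (hstar : StarHyp i j) (hm : 0 < m) :
    ∀ l < m, aext a (i ⟨0, hm⟩ + l) = bext b (j ⟨0, hm⟩ + l) := by
  obtain ⟨-, -, -, -, heq, -⟩ := hinter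
  intro l hl
  simpa only [hstar.eq_add hm ⟨l, hl⟩] using heq ⟨l, hl⟩

lemma InterDbar.exists_aext_add_eq {m : ℕ} {i j : Fin m → ℕ} (hinter : InterDbar b a i j)
    (hstar : StarHyp i j) (hm : 0 < m) :
    ∀ y ∈ (cycA a).support, y ∈ (cycB 0 b).support → ∃ l < m, aext a (i ⟨0, hm⟩ + l) = y := by
  obtain ⟨-, -, -, -, -, hsupp⟩ := hinter
  intro y hyA hyB
  obtain ⟨l, -, hl⟩ := Finset.mem_image.mp (hsupp ▸ Finset.mem_inter.mpr ⟨hyA, hyB⟩)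
  exact ⟨l, l.2, (hstar.eq_add hm l).1 ▸ hl⟩

/-- case 1' of the definition of `ψ`.  Suppose `(B̄,Ā) ∈ D̄` with `m ≥ 1`
satisfies (∗∗), `i_1 ≥ 2`, `i_m ≤ k̄`, `u⁻¹(ā_{i_m}) < u⁻¹(ā_{i_m+1})` and
`b̄_{j_1−1} < ā_{i_1−1}`.  With `Ã := Ā` and
`B̃ := (b̄_{j_m}, b̄_{j_m+1})·(b̄_{j_1}, ā_{i_1−1})·B̄`, one has `(Ã,B̃) ∈ D`,
`B̃·Ã = Ā·B̄` and `k̃ + h̃ = k̄ + h̄`. -/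
theorem statement7 (n : ℕ) (u v : Equiv.Perm (Fin (n+2))) (h k : ℕ)
    (b : Fin h → Fin (n+2)) (a : Fin k → Fin (n+2))
    (hB : DbarCondB u v b) (hA : DbarCondA u v (cycB 0 b) a)
    (m : ℕ) (hm : 0 < m) (i j : Fin m → ℕ)
    (hinter : InterDbar b a i j) (hstar : StarHyp i j)
    (hi1 : 2 ≤ i ⟨0, hm⟩)
    (him : i ⟨m - 1, by omega⟩ ≤ k)
    (hpos : u.symm (aext a (i ⟨m - 1, by omega⟩)) < u.symm (aext a (i ⟨m - 1, by omega⟩ + 1)))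
    (hcmp : bext b (j ⟨0, hm⟩ - 1) < aext a (i ⟨0, hm⟩ - 1)) :
    ∀ At Bt : Equiv.Perm (Fin (n+2)),
      At = cycA a →
      Bt = Equiv.swap (bext b (j ⟨m - 1, by omega⟩)) (bext b (j ⟨m - 1, by omega⟩ + 1)) *
            (Equiv.swap (bext b (j ⟨0, hm⟩)) (aext a (i ⟨0, hm⟩ - 1)) * cycB 0 b) →
      memD u v At Bt ∧ Bt * At = cycA a * cycB 0 b ∧ clen At + clen Bt = k + h := by
  rintro At Bt rfl hBt
  have hab := hinter.aext_add_eq_bext_add hstar hm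
  have hsupp := hinter.exists_aext_add_eq hstar hm
  obtain ⟨-, -, -, hj, -⟩ := hinter
  set p := i ⟨0, hm⟩
  set q := j ⟨0, hm⟩
  have hlast : i ⟨m - 1, by omega⟩ = p + (m - 1) ∧ j ⟨m - 1, by omega⟩ = q + (m - 1) :=
    hstar.eq_add hm ⟨m - 1, by omega⟩
  have hq : 1 ≤ q := (hj ⟨0, hm⟩).1
  have hqh : q + m ≤ h + 1 := by have := (hj ⟨m - 1, by omega⟩).2; omega
  have hpk : p + m ≤ k + 1 := by omega
  rw [hlast.1] at hpos
  rw [hlast.2, add_assoc, Nat.sub_add_cancel hm, ← cycA_mul_cycB_mul_inv hB.1 hB.2.1 (by omega)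
    hA.1 hA.2.1 (by omega) hab hsupp hm hi1 hq hpk hqh] at hBt
  subst hBt
  exact ⟨memD_cycA_mul_cycB_mul_inv hB hA hab hsupp hm hi1 hq hpk hqh hpos hcmp, by group,
    clen_cycA_add_clen_conj hB.1 hB.2.1 (by omega) hA.1 hA.2.1 (by omega) _⟩

end DblShortcut
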